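/- Boundary domination of the quantile: Fix α ∈ (0,1), a nonempty S ⊆ {1,…,m} with Π_S := Σ_{k : supp(k) ⊆ S} π_k ≥ α, and a nonempty σ ⊆ W̄ on which every element has support exactly S and the sign of W^k − W^ℓ is constant for every pair k, ℓ with supports contained in S; let k_σ be a count vector with supp(k_σ) ⊆ S such that Q_{n,α}(W) = W^{k_σ} on σ. If W^{(j)} ∈ σ is a sequence converging to a point W* ∈ W̄, then Q_{n,α}(W*) ≥ (W*)^{k_σ} and (W*)^{k_σ} = lim_{j→∞} Q_{n,α}(W^{(j)}). -/
import Mathlib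


open Finset Filter Topology
open scoped Classical

noncomputable section

/-- The closed Arrow–Debreu wealth simplex `{W ∈ [0,∞)^m : Σ q_i W_i = 1}`. -/
def closedSimplex {m : ℕ} (q : Fin m → ℝ) : Set (Fin m → ℝ) :=
  {W | (∀ i, 0 ≤ W i) ∧ ∑ i, q i * W i = 1}

/-- The open Arrow–Debreu wealth simplex `{W ∈ (0,∞)^m : Σ q_i W_i = 1}`. -/
def openSimplex {m : ℕ} (q : Fin m → ℝ) : Set (Fin m → ℝ) :=
  {W | (∀ i, 0 < W i) ∧ ∑ i, q i * W i = 1}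

/-- The finite set `C_n` of count vectors `k : Fin m → ℕ` with `Σ k_i = n`. -/
def countFinset (m n : ℕ) : Finset (Fin m → ℕ) :=
  (Fintype.piFinset fun _ : Fin m => Finset.range (n + 1)).filter fun k => ∑ i, k i = n

/-- The monomial `W^k := Π_i W_i^{k_i}` (with the convention `0^0 = 1`). -/
def mono {m : ℕ} (W : Fin m → ℝ) (k : Fin m → ℕ) : ℝ := ∏ i, W i ^ k i

/-- The multinomial probability `π_k = (n!/(k_1!⋯k_m!))·Π p_i^{k_i}`. -/
def countProb {m : ℕ} (p : Fin m → ℝ) (k : Fin m → ℕ) : ℝ :=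
  (Nat.multinomial Finset.univ k : ℝ) * ∏ i, p i ^ k i

/-- The upper α-quantile of terminal wealth
`Q_{n,α}(W) := sup{t ∈ [0,∞) : Σ_{k ∈ C_n : W^k ≥ t} π_k ≥ α}`. -/
def upperQuantile {m : ℕ} (p : Fin m → ℝ) (n : ℕ) (α : ℝ) (W : Fin m → ℝ) : ℝ :=
  sSup {t : ℝ | 0 ≤ t ∧
    α ≤ ∑ k ∈ countFinset m n, if t ≤ mono W k then countProb p k else 0}

/-- The union of the count hyperplanes `H_{k,ℓ}`. -/
def hyperUnion (m n : ℕ) : Set (Fin m → ℝ) :=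
  {u | ∃ k ∈ countFinset m n, ∃ l ∈ countFinset m n,
    k ≠ l ∧ ∑ i, ((k i : ℝ) - (l i : ℝ)) * u i = 0}

/-- A chamber is a connected component of the complement of the count arrangement. -/
def IsChamber (m n : ℕ) (Γ : Set (Fin m → ℝ)) : Prop :=
  ∃ u ∈ (hyperUnion m n)ᶜ, Γ = connectedComponentIn (hyperUnion m n)ᶜ u

/-- `F_Γ := {W ∈ W⁺⁺ : log W ∈ Γ}`. -/
def chamberFace {m : ℕ} (q : Fin m → ℝ) (Γ : Set (Fin m → ℝ)) : Set (Fin m → ℝ) :=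
  {W | W ∈ openSimplex q ∧ (fun i => Real.log (W i)) ∈ Γ}

/-- `k` is the quantile count vector `k_{α,Γ}` of the chamber `Γ`: the tail mass at `W^k`
is at least `α`, while the strict tail mass is below `α`, for every `W ∈ F_Γ`. -/
def IsQuantileVec {m : ℕ} (p q : Fin m → ℝ) (n : ℕ) (α : ℝ) (Γ : Set (Fin m → ℝ))
    (k : Fin m → ℕ) : Prop :=
  k ∈ countFinset m n ∧
  ∀ W ∈ chamberFace q Γ,
    α ≤ (∑ l ∈ countFinset m n, if mono W k ≤ mono W l then countProb p l else 0) ∧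
    (∑ l ∈ countFinset m n, if mono W k < mono W l then countProb p l else 0) < α


lemma countFinset_nonempty {m : ℕ} (hm : 0 < m) (n : ℕ) : (countFinset m n).Nonempty := by
  refine ⟨fun i => if i = ⟨0, hm⟩ then n else 0, ?_⟩
  simp only [countFinset, Finset.mem_filter, Fintype.mem_piFinset, Finset.mem_range]
  constructor
  · intro i; split <;> omega
  · simp

lemma countProb_nonneg {m : ℕ} {p : Fin m → ℝ} (hp : ∀ i, 0 < p i) (k : Fin m → ℕ) :
    0 ≤ countProb p k :=
  mul_nonneg (Nat.cast_nonneg _) (Finset.prod_nonneg fun i _ => pow_nonneg (hp i).le _)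

lemma mono_continuous {m : ℕ} (k : Fin m → ℕ) :
    Continuous (fun W : Fin m → ℝ => mono W k) :=
  continuous_finset_prod _ fun i _ => (continuous_apply i).pow _

lemma quantileSet_bddAbove {m n : ℕ} (hm : 0 < m) {p : Fin m → ℝ} {α : ℝ} (hα : 0 < α)
    (W : Fin m → ℝ) :
    BddAbove {t : ℝ | 0 ≤ t ∧
      α ≤ ∑ k ∈ countFinset m n, if t ≤ mono W k then countProb p k else 0} := by
  refine ⟨(countFinset m n).sup' (countFinset_nonempty hm n) (mono W), ?_⟩
  intro t ht
  by_contra hlt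
  push_neg at hlt
  have hz : (∑ k ∈ countFinset m n, if t ≤ mono W k then countProb p k else 0) = 0 := by
    apply Finset.sum_eq_zero
    intro k hk
    rw [if_neg]
    push_neg
    exact lt_of_le_of_lt (Finset.le_sup' (mono W) hk) hlt
  obtain ⟨-, htα⟩ := ht
  rw [hz] at htα
  linarith

/-- **Boundary domination of the quantile.** On a nonzero stratum `σ` with active count
vector `k_σ`, if a sequence in `σ` converges to `W* ∈ W̄`, then
`Q_{n,α}(W*) ≥ (W*)^{k_σ}` and `(W*)^{k_σ} = lim_j Q_{n,α}(W^{(j)})`. -/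
theorem boundary_domination (m n : ℕ) (hm : 2 ≤ m) (hn : 1 ≤ n)
    (p q : Fin m → ℝ) (hp : ∀ i, 0 < p i ∧ p i < 1) (hpsum : ∑ i, p i = 1)
    (hq : ∀ i, 0 < q i) (α : ℝ) (hα : 0 < α ∧ α < 1)
    (S : Finset (Fin m)) (hS : S.Nonempty)
    (hmass : α ≤ ∑ k ∈ countFinset m n,
        if ∀ i, 0 < k i → i ∈ S then countProb p k else 0)
    (σ : Set (Fin m → ℝ)) (hσsub : σ ⊆ closedSimplex q) (hσne : σ.Nonempty)
    (hsupp : ∀ W ∈ σ, ∀ i, 0 < W i ↔ i ∈ S)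
    (hsign : ∀ k l : Fin m → ℕ, k ∈ countFinset m n → l ∈ countFinset m n →
      (∀ i, 0 < k i → i ∈ S) → (∀ i, 0 < l i → i ∈ S) →
      ∀ W ∈ σ, ∀ W' ∈ σ,
        (mono W k < mono W l ↔ mono W' k < mono W' l) ∧
        (mono W k = mono W l ↔ mono W' k = mono W' l))
    (kσ : Fin m → ℕ) (hkσ : kσ ∈ countFinset m n) (hkσS : ∀ i, 0 < kσ i → i ∈ S)
    (hQ : ∀ W ∈ σ, upperQuantile p n α W = mono W kσ)
    (Wseq : ℕ → (Fin m → ℝ)) (hWseq : ∀ j, Wseq j ∈ σ)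
    (Wstar : Fin m → ℝ) (hWstar : Wstar ∈ closedSimplex q)
    (hconv : Filter.Tendsto Wseq Filter.atTop (nhds Wstar)) :
    mono Wstar kσ ≤ upperQuantile p n α Wstar ∧
    Filter.Tendsto (fun j => upperQuantile p n α (Wseq j)) Filter.atTop
      (nhds (mono Wstar kσ)) := by
  have hm0 : 0 < m := by omega
  have hp0 : ∀ i, 0 < p i := fun i => (hp i).1
  -- positivity of mono W kσ on σ
  have hpos : ∀ W ∈ σ, 0 < mono W kσ := by
    intro W hW
    apply Finset.prod_pos
    intro i _
    rcases Nat.eq_zero_or_pos (kσ i) with h0 | h0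
    · rw [h0, pow_zero]; exact one_pos
    · exact pow_pos ((hsupp W hW i).mpr (hkσS i h0)) _
  -- key: tail mass at mono W kσ is at least α, for W ∈ σ
  have key : ∀ W ∈ σ, α ≤ ∑ k ∈ countFinset m n,
      if mono W kσ ≤ mono W k then countProb p k else 0 := by
    intro W hW
    set t0 := mono W kσ with ht0def
    have ht0 : 0 < t0 := hpos W hW
    have hsup : sSup {t : ℝ | 0 ≤ t ∧
        α ≤ ∑ k ∈ countFinset m n, if t ≤ mono W k then countProb p k else 0} = t0 :=
      hQ W hW
    set Sset := {t : ℝ | 0 ≤ t ∧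
        α ≤ ∑ k ∈ countFinset m n, if t ≤ mono W k then countProb p k else 0} with hSsetdef
    have hne : Sset.Nonempty := by
      by_contra h
      rw [Set.not_nonempty_iff_eq_empty] at h
      rw [h, Real.sSup_empty] at hsup
      linarith
    -- c : max of 0 and the mono-values strictly below t0
    set V := ((countFinset m n).filter (fun k => mono W k < t0)).image (mono W) with hVdef
    set c := (insert (0:ℝ) V).max' (Finset.insert_nonempty _ _) with hcdef
    have hc : c < t0 := by
      rw [hcdef]
      apply Finset.max'_lt_iff _ (Finset.insert_nonempty _ _) |>.mpr
      intro y hy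
      rcases Finset.mem_insert.mp hy with h | h
      · rw [h]; exact ht0
      · obtain ⟨k, hk, rfl⟩ := Finset.mem_image.mp h
        exact (Finset.mem_filter.mp hk).2
    obtain ⟨t, htS, hct⟩ := exists_lt_of_lt_csSup hne (by rw [hsup]; exact hc)
    have htle : t ≤ t0 := by
      rw [← hsup]
      exact le_csSup (quantileSet_bddAbove hm0 hα.1 W) htS
    refine le_trans htS.2 (le_of_eq ?_)
    apply Finset.sum_congr rfl
    intro k hk
    congr 1
    simp only [eq_iff_iff]
    constructor
    · intro htk
      by_contra hlt
      push_neg at hlt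
      have hkV : mono W k ∈ insert (0:ℝ) V := by
        apply Finset.mem_insert_of_mem
        exact Finset.mem_image.mpr ⟨k, Finset.mem_filter.mpr ⟨hk, hlt⟩, rfl⟩
      have : mono W k ≤ c := Finset.le_max' _ _ hkV
      linarith
    · intro h0k
      exact le_trans htle h0k
  -- transfer to Wstar
  obtain ⟨W0, hW0⟩ := hσne
  have htrans : ∀ k ∈ countFinset m n, mono W0 kσ ≤ mono W0 k →
      mono Wstar kσ ≤ mono Wstar k := by
    intro k hk hle
    have hkS : ∀ i, 0 < k i → i ∈ S := by
      intro i hi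
      by_contra hiS
      have hW0i : W0 i = 0 := by
        have h1 : ¬ (0 < W0 i) := fun h => hiS ((hsupp W0 hW0 i).mp h)
        have h2 : 0 ≤ W0 i := (hσsub hW0).1 i
        linarith
      have : mono W0 k = 0 := by
        apply Finset.prod_eq_zero (Finset.mem_univ i)
        rw [hW0i]
        exact zero_pow hi.ne'
      rw [this] at hle
      exact absurd hle (not_le.mpr (hpos W0 hW0))
    have hseq : ∀ j, mono (Wseq j) kσ ≤ mono (Wseq j) k := by
      intro j
      have hs := hsign kσ k hkσ hk hkσS hkS W0 hW0 (Wseq j) (hWseq j)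
      rcases lt_or_eq_of_le hle with h | h
      · exact (hs.1.mp h).le
      · exact (hs.2.mp h).le
    have h1 : Tendsto (fun j => mono (Wseq j) kσ) atTop (nhds (mono Wstar kσ)) :=
      ((mono_continuous kσ).continuousAt.tendsto.comp hconv)
    have h2 : Tendsto (fun j => mono (Wseq j) k) atTop (nhds (mono Wstar k)) :=
      ((mono_continuous k).continuousAt.tendsto.comp hconv)
    exact le_of_tendsto_of_tendsto' h1 h2 hseq
  constructor
  · -- first part
    apply le_csSup (quantileSet_bddAbove hm0 hα.1 Wstar)
    refine ⟨Finset.prod_nonneg fun i _ => pow_nonneg (hWstar.1 i) _, ?_⟩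
    refine le_trans (key W0 hW0) (Finset.sum_le_sum ?_)
    intro k hk
    by_cases h : mono W0 kσ ≤ mono W0 k
    · rw [if_pos h, if_pos (htrans k hk h)]
    · rw [if_neg h]
      split
      · exact countProb_nonneg hp0 k
      · exact le_refl 0
  · -- second part
    have : ∀ j, upperQuantile p n α (Wseq j) = mono (Wseq j) kσ := fun j =>
      hQ (Wseq j) (hWseq j)
    rw [show (fun j => upperQuantile p n α (Wseq j)) = fun j => mono (Wseq j) kσ from
      funext this]
    exact (mono_continuous kσ).continuousAt.tendsto.comp hconv
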